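/- Let a, b ∈ ℝ, c > 0, L₁ > 0, L₂ + L₃ ≥ 0 and L₄ ∈ ℝ. Then there exists a constant C ≥ 0, depending only on a, b, c, L₁, L₄, such that for every smooth compactly supported map Q : ℝ³ → S₀ one has ∫_{ℝ³} tr(Q · H_Q) dx ≤ −(L₁/2) ∫_{ℝ³} |∇Q|² dx − (L₂+L₃) ∫_{ℝ³} |div Q|² dx + C ∫_{ℝ³} (|Q|² + |Q|⁴) dx, where H_Q = M_Q + E_Q + B_Q. -/

import Mathlib

open Matrix Finset MeasureTheory

noncomputable section

/-- Partial derivative in the `k`-th coordinate direction. -/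
def pd (k : Fin 3) (f : (Fin 3 → ℝ) → ℝ) (x : Fin 3 → ℝ) : ℝ :=
  fderiv ℝ f x (Pi.single k 1)

/-- The Levi-Civita symbol on `Fin 3`. -/
def eps (i j k : Fin 3) : ℝ :=
  ((((j : ℕ) : ℝ) - ((i : ℕ) : ℝ)) * (((k : ℕ) : ℝ) - ((j : ℕ) : ℝ))
    * (((k : ℕ) : ℝ) - ((i : ℕ) : ℝ))) / 2

/-- The `M_Q` elastic part of the molecular field. -/
def MQ (L₁ L₂ L₃ : ℝ) (Q : (Fin 3 → ℝ) → Matrix (Fin 3) (Fin 3) ℝ) (i j : Fin 3)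
    (x : Fin 3 → ℝ) : ℝ :=
  L₁ * (∑ k : Fin 3, pd k (pd k (fun y => Q y i j)) x)
    + (L₂ + L₃) / 2 *
      ((∑ k : Fin 3, pd k (pd j (fun y => Q y i k)) x)
        + (∑ k : Fin 3, pd k (pd i (fun y => Q y j k)) x)
        - 2 / 3 * (if i = j then (1 : ℝ) else 0)
            * ∑ k : Fin 3, ∑ p : Fin 3, pd k (pd p (fun y => Q y k p)) x)

/-- The `E_Q` (chiral) elastic part of the molecular field. -/
def EQ (L₄ : ℝ) (Q : (Fin 3 → ℝ) → Matrix (Fin 3) (Fin 3) ℝ) (i j : Fin 3)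
    (x : Fin 3 → ℝ) : ℝ :=
  L₄ / 2 * ((∑ l : Fin 3, ∑ k : Fin 3, eps l i k * pd k (fun y => Q y l j) x)
    + (∑ l : Fin 3, ∑ k : Fin 3, eps l j k * pd k (fun y => Q y l i) x)
    - 2 / 3 * (if i = j then (1 : ℝ) else 0)
        * ∑ l : Fin 3, ∑ p : Fin 3, ∑ k : Fin 3, eps l p k * pd k (fun y => Q y l p) x)

/-- The bulk part of the molecular field. -/
def bulkB (a b c : ℝ) (Q : Matrix (Fin 3) (Fin 3) ℝ) : Matrix (Fin 3) (Fin 3) ℝ :=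
  (-a) • Q + b • (Q ^ 2 - ((Q ^ 2).trace / 3) • (1 : Matrix (Fin 3) (Fin 3) ℝ))
    - (c * (Q ^ 2).trace) • Q

/-- The full molecular field `H_Q = M_Q + E_Q + B_Q`. -/
def HQ (L₁ L₂ L₃ L₄ a b c : ℝ) (Q : (Fin 3 → ℝ) → Matrix (Fin 3) (Fin 3) ℝ)
    (i j : Fin 3) (x : Fin 3 → ℝ) : ℝ :=
  MQ L₁ L₂ L₃ Q i j x + EQ L₄ Q i j x + bulkB a b c (Q x) i j

lemma pd_contDiff {f : (Fin 3 → ℝ) → ℝ} (hf : ContDiff ℝ (⊤ : ℕ∞) f) (k : Fin 3) :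
    ContDiff ℝ (⊤ : ℕ∞) (pd k f) := by
  exact (hf.fderiv_right (by simp)).clm_apply contDiff_const

lemma pd_hcs {f : (Fin 3 → ℝ) → ℝ} (hf : HasCompactSupport f) (k : Fin 3) :
    HasCompactSupport (pd k f) :=
  (hf.fderiv ℝ).comp_left (g := fun L : (Fin 3 → ℝ) →L[ℝ] ℝ => L (Pi.single k 1)) rfl

lemma ibp (f g : (Fin 3 → ℝ) → ℝ) (hf : ContDiff ℝ (⊤ : ℕ∞) f) (hf' : HasCompactSupport f)
    (hg : ContDiff ℝ (⊤ : ℕ∞) g) (hg' : HasCompactSupport g) (k : Fin 3) :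
    ∫ x, f x * pd k g x = -∫ x, pd k f x * g x := by
  obtain ⟨Cf, hCf⟩ := hf.lipschitzWith_of_hasCompactSupport hf' (by simp)
  obtain ⟨Cg, hCg⟩ := hg.lipschitzWith_of_hasCompactSupport hg' (by simp)
  have h1 := hCf.integral_lineDeriv_mul_eq (μ := volume) hCg hg' (Pi.single k 1)
  have e1 : ∀ x, lineDeriv ℝ f x (Pi.single k 1) = pd k f x := fun x =>
    ((hf.differentiable (by simp)) x).lineDeriv_eq_fderiv
  have e2 : ∀ x, lineDeriv ℝ g x (-(Pi.single k 1)) = -(pd k g x) := fun x => by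
    rw [((hg.differentiable (by simp)) x).lineDeriv_eq_fderiv, map_neg]; rfl
  simp only [e1, e2] at h1
  have h2 : ∫ x, -pd k g x * f x = -∫ x, f x * pd k g x := by
    rw [← integral_neg]; congr 1; funext x; ring
  rw [h2] at h1; linarith

lemma pd_comm (f : (Fin 3 → ℝ) → ℝ) (hf : ContDiff ℝ (⊤ : ℕ∞) f) (j k : Fin 3) (x : Fin 3 → ℝ) :
    pd k (pd j f) x = pd j (pd k f) x := by
  have hs : IsSymmSndFDerivAt ℝ f x := hf.contDiffAt.isSymmSndFDerivAt (by simp; exact WithTop.coe_le_coe.mpr le_top)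
  have hd : DifferentiableAt ℝ (fderiv ℝ f) x :=
    ((hf.fderiv_right (WithTop.coe_le_coe.mpr le_top) : ContDiff ℝ 1 (fderiv ℝ f)).differentiable one_ne_zero) x
  have key : ∀ v w : Fin 3 → ℝ,
      fderiv ℝ (fun y => fderiv ℝ f y v) x w = fderiv ℝ (fderiv ℝ f) x w v := by
    intro v w
    rw [fderiv_clm_apply hd (differentiableAt_const v)]
    simp
  unfold pd
  rw [key, key, hs]

/-- integrability of `f * g` when `f` is smooth cpt-supported and `g` continuous -/
lemma intg_mul {f g : (Fin 3 → ℝ) → ℝ} (hfc : Continuous f) (hf : HasCompactSupport f)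
    (hg : Continuous g) : Integrable (fun x => f x * g x) :=
  (hfc.mul hg).integrable_of_hasCompactSupport (hf.mul_right)

section StepM
variable (L₁ L₂ L₃ : ℝ) (Q : (Fin 3 → ℝ) → Matrix (Fin 3) (Fin 3) ℝ)

lemma keyM
    (hsym : ∀ x, (Q x).IsSymm) (htr : ∀ x, (Q x).trace = 0) (x : Fin 3 → ℝ) :
    (∑ α : Fin 3, ∑ β : Fin 3, Q x α β * MQ L₁ L₂ L₃ Q β α x)
      = L₁ * (∑ α : Fin 3, ∑ β : Fin 3, ∑ k : Fin 3,
            Q x α β * pd k (pd k (fun y => Q y α β)) x)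
        + (L₂ + L₃) * (∑ α : Fin 3, ∑ β : Fin 3, ∑ k : Fin 3,
            Q x α β * pd k (pd α (fun y => Q y β k)) x) := by
  have eF : ∀ i j : Fin 3, (fun y => Q y j i) = (fun y => Q y i j) :=
    fun i j => funext fun y => (hsym y).apply i j
  have qsym : ∀ i j : Fin 3, Q x j i = Q x i j := fun i j => (hsym x).apply i j
  have tr0 : (∑ d : Fin 3, Q x d d) = 0 := by
    have := htr x
    simpa [Matrix.trace, Matrix.diag] using this
  have split : ∀ α β : Fin 3, Q x α β * MQ L₁ L₂ L₃ Q β α x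
      = L₁ * (∑ k : Fin 3, Q x α β * pd k (pd k (fun y => Q y β α)) x)
        + (L₂ + L₃) / 2 * (∑ k : Fin 3, Q x α β * pd k (pd α (fun y => Q y β k)) x)
        + (L₂ + L₃) / 2 * (∑ k : Fin 3, Q x α β * pd k (pd β (fun y => Q y α k)) x)
        - (L₂ + L₃) / 3 * ((if β = α then Q x α β else 0)
            * ∑ k : Fin 3, ∑ p : Fin 3, pd k (pd p (fun y => Q y k p)) x) := by
    intro α β
    unfold MQ
    simp only [← Finset.mul_sum]
    split_ifs <;> ring
  simp only [split]
  simp only [Finset.sum_add_distrib, Finset.sum_sub_distrib, ← Finset.mul_sum]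
  have P0 : (∑ α : Fin 3, ∑ β : Fin 3, ((if β = α then Q x α β else 0)
      * ∑ k : Fin 3, ∑ p : Fin 3, pd k (pd p (fun y => Q y k p)) x)) = 0 := by
    have h1 : ∀ α : Fin 3, (∑ β : Fin 3, ((if β = α then Q x α β else 0)
        * ∑ k : Fin 3, ∑ p : Fin 3, pd k (pd p (fun y => Q y k p)) x))
        = Q x α α * ∑ k : Fin 3, ∑ p : Fin 3, pd k (pd p (fun y => Q y k p)) x := by
      intro α
      rw [Finset.sum_eq_single α]
      · simp
      · intro b _ hb; simp [hb]
      · intro h; exact absurd (Finset.mem_univ α) h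
    simp only [h1]
    rw [← Finset.sum_mul, tr0, zero_mul]
  have P1 : (∑ α : Fin 3, ∑ β : Fin 3,
        Q x α β * ∑ k : Fin 3, pd k (pd k (fun y => Q y β α)) x)
      = ∑ α : Fin 3, ∑ β : Fin 3,
        Q x α β * ∑ k : Fin 3, pd k (pd k (fun y => Q y α β)) x := by
    refine Finset.sum_congr rfl fun α _ => Finset.sum_congr rfl fun β _ => ?_
    rw [eF α β]
  have P2 : (∑ α : Fin 3, ∑ β : Fin 3,
        Q x α β * ∑ k : Fin 3, pd k (pd β (fun y => Q y α k)) x)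
      = ∑ α : Fin 3, ∑ β : Fin 3,
        Q x α β * ∑ k : Fin 3, pd k (pd α (fun y => Q y β k)) x := by
    rw [Finset.sum_comm]
    refine Finset.sum_congr rfl fun b _ => Finset.sum_congr rfl fun a _ => ?_
    rw [qsym a b]
  rw [P0, P1, P2]
  ring

lemma integral_sum3 (g : Fin 3 → Fin 3 → Fin 3 → (Fin 3 → ℝ) → ℝ)
    (h : ∀ a b k, Integrable (g a b k)) :
    (∫ x : Fin 3 → ℝ, ∑ a : Fin 3, ∑ b : Fin 3, ∑ k : Fin 3, g a b k x)
      = ∑ a : Fin 3, ∑ b : Fin 3, ∑ k : Fin 3, ∫ x : Fin 3 → ℝ, g a b k x := by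
  rw [integral_finset_sum _ (fun a _ => (integrable_finset_sum _
    (fun b _ => integrable_finset_sum _ (fun k _ => h a b k))))]
  refine Finset.sum_congr rfl fun a _ => ?_
  rw [integral_finset_sum _ (fun b _ => integrable_finset_sum _ (fun k _ => h a b k))]
  refine Finset.sum_congr rfl fun b _ => ?_
  exact integral_finset_sum _ (fun k _ => h a b k)

lemma stepM
    (hs : ∀ i j : Fin 3, ContDiff ℝ (⊤ : ℕ∞) (fun y => Q y i j))
    (hc : ∀ i j : Fin 3, HasCompactSupport (fun y => Q y i j))
    (hsym : ∀ x, (Q x).IsSymm) (htr : ∀ x, (Q x).trace = 0) :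
    (∫ x : Fin 3 → ℝ, ∑ α : Fin 3, ∑ β : Fin 3, Q x α β * MQ L₁ L₂ L₃ Q β α x)
      = -L₁ * (∫ x : Fin 3 → ℝ,
            ∑ α : Fin 3, ∑ β : Fin 3, ∑ k : Fin 3, (pd k (fun y => Q y α β) x) ^ 2)
        - (L₂ + L₃) * (∫ x : Fin 3 → ℝ,
            ∑ α : Fin 3, (∑ β : Fin 3, pd β (fun y => Q y α β) x) ^ 2) := by
  have eF : ∀ i j : Fin 3, (fun y => Q y j i) = (fun y => Q y i j) :=
    fun i j => funext fun y => (hsym y).apply i j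
  have cQ : ∀ i j : Fin 3, Continuous (fun y => Q y i j) := fun i j => (hs i j).continuous
  have cpd1 : ∀ i j k : Fin 3, Continuous (pd k (fun y => Q y i j)) :=
    fun i j k => (pd_contDiff (hs i j) k).continuous
  have cpd2 : ∀ i j k p : Fin 3, Continuous (pd k (pd p (fun y => Q y i j))) :=
    fun i j k p => (pd_contDiff (pd_contDiff (hs i j) p) k).continuous
  -- integrable atoms
  have intQD2 : ∀ i j k p e f : Fin 3,
      Integrable (fun x => Q x i j * pd k (pd p (fun y => Q y e f)) x) :=
    fun i j k p e f => intg_mul (cQ i j) (hc i j) (cpd2 e f k p)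
  have intDD : ∀ i j k e f p : Fin 3,
      Integrable (fun x => pd k (fun y => Q y i j) x * pd p (fun y => Q y e f) x) :=
    fun i j k e f p => intg_mul (cpd1 i j k) (pd_hcs (hc i j) k) (cpd1 e f p)
  have intD2 : ∀ i j k : Fin 3, Integrable (fun x => (pd k (fun y => Q y i j) x) ^ 2) := by
    intro i j k
    have := intDD i j k i j k
    simpa [pow_two] using this
  -- rewrite via the pointwise identity
  rw [show (fun x => ∑ α : Fin 3, ∑ β : Fin 3, Q x α β * MQ L₁ L₂ L₃ Q β α x)
      = (fun x => L₁ * (∑ α : Fin 3, ∑ β : Fin 3, ∑ k : Fin 3,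
            Q x α β * pd k (pd k (fun y => Q y α β)) x)
        + (L₂ + L₃) * (∑ α : Fin 3, ∑ β : Fin 3, ∑ k : Fin 3,
            Q x α β * pd k (pd α (fun y => Q y β k)) x))
      from funext (keyM L₁ L₂ L₃ Q hsym htr)]
  have intA : Integrable (fun x => ∑ α : Fin 3, ∑ β : Fin 3, ∑ k : Fin 3,
      Q x α β * pd k (pd k (fun y => Q y α β)) x) :=
    integrable_finset_sum _ fun α _ => integrable_finset_sum _ fun β _ =>
      integrable_finset_sum _ fun k _ => intQD2 α β k k α β
  have intB : Integrable (fun x => ∑ α : Fin 3, ∑ β : Fin 3, ∑ k : Fin 3,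
      Q x α β * pd k (pd α (fun y => Q y β k)) x) :=
    integrable_finset_sum _ fun α _ => integrable_finset_sum _ fun β _ =>
      integrable_finset_sum _ fun k _ => intQD2 α β k α β k
  rw [integral_add (intA.const_mul L₁) (intB.const_mul (L₂ + L₃)),
    integral_const_mul, integral_const_mul]
  -- Laplacian part
  have hA : (∫ x : Fin 3 → ℝ, ∑ α : Fin 3, ∑ β : Fin 3, ∑ k : Fin 3,
        Q x α β * pd k (pd k (fun y => Q y α β)) x)
      = -(∫ x : Fin 3 → ℝ,
          ∑ α : Fin 3, ∑ β : Fin 3, ∑ k : Fin 3, (pd k (fun y => Q y α β) x) ^ 2) := by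
    rw [integral_sum3 _ (fun α β k => intQD2 α β k k α β),
      integral_sum3 _ (fun α β k => intD2 α β k)]
    rw [← Finset.sum_neg_distrib]
    refine Finset.sum_congr rfl fun α _ => ?_
    rw [← Finset.sum_neg_distrib]
    refine Finset.sum_congr rfl fun β _ => ?_
    rw [← Finset.sum_neg_distrib]
    refine Finset.sum_congr rfl fun k _ => ?_
    have h := ibp (fun y => Q y α β) (pd k (fun y => Q y α β)) (hs α β) (hc α β)
      (pd_contDiff (hs α β) k) (pd_hcs (hc α β) k) k
    simpa [pow_two] using h
  -- mixed part
  have hB : (∫ x : Fin 3 → ℝ, ∑ α : Fin 3, ∑ β : Fin 3, ∑ k : Fin 3,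
        Q x α β * pd k (pd α (fun y => Q y β k)) x)
      = -(∫ x : Fin 3 → ℝ, ∑ α : Fin 3, (∑ β : Fin 3, pd β (fun y => Q y α β) x) ^ 2) := by
    -- swap derivatives pointwise
    rw [show (fun x => ∑ α : Fin 3, ∑ β : Fin 3, ∑ k : Fin 3,
          Q x α β * pd k (pd α (fun y => Q y β k)) x)
        = (fun x => ∑ α : Fin 3, ∑ β : Fin 3, ∑ k : Fin 3,
          Q x α β * pd α (pd k (fun y => Q y β k)) x) from funext fun x =>
        Finset.sum_congr rfl fun α _ => Finset.sum_congr rfl fun β _ =>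
          Finset.sum_congr rfl fun k _ => by rw [pd_comm _ (hs β k)]]
    rw [integral_sum3 _ (fun α β k => intg_mul (cQ α β) (hc α β)
      (pd_contDiff (pd_contDiff (hs β k) k) α).continuous)]
    -- right side: expand the square and interchange
    have hRHS : (∫ x : Fin 3 → ℝ, ∑ α : Fin 3, (∑ β : Fin 3, pd β (fun y => Q y α β) x) ^ 2)
        = ∑ γ : Fin 3, ∑ b : Fin 3, ∑ k : Fin 3,
            ∫ x : Fin 3 → ℝ, pd b (fun y => Q y γ b) x * pd k (fun y => Q y γ k) x := by
      rw [show (fun x => ∑ α : Fin 3, (∑ β : Fin 3, pd β (fun y => Q y α β) x) ^ 2)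
          = (fun x => ∑ α : Fin 3, ∑ b : Fin 3, ∑ k : Fin 3,
              pd b (fun y => Q y α b) x * pd k (fun y => Q y α k) x) from funext fun x =>
          Finset.sum_congr rfl fun α _ => by rw [sq, Finset.sum_mul_sum]]
      exact integral_sum3 _ (fun γ b k => intDD γ b b γ k k)
    rw [hRHS]
    -- per-atom integration by parts
    have atom : ∀ α β k : Fin 3,
        (∫ x : Fin 3 → ℝ, Q x α β * pd α (pd k (fun y => Q y β k)) x)
          = -∫ x : Fin 3 → ℝ, pd α (fun y => Q y β α) x * pd k (fun y => Q y β k) x := by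
      intro α β k
      have h := ibp (fun y => Q y α β) (pd k (fun y => Q y β k)) (hs α β) (hc α β)
        (pd_contDiff (hs β k) k) (pd_hcs (hc β k) k) α
      rw [eF β α] at h
      simpa using h
    simp only [atom]
    rw [← Finset.sum_neg_distrib]
    rw [Finset.sum_comm]
    refine Finset.sum_congr rfl fun b _ => ?_
    rw [← Finset.sum_neg_distrib]
    refine Finset.sum_congr rfl fun a _ => ?_
    rw [← Finset.sum_neg_distrib]
  rw [hA, hB]
  ring
end StepM

section StepE
variable (L₁ L₄ : ℝ) (Q : (Fin 3 → ℝ) → Matrix (Fin 3) (Fin 3) ℝ)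

lemma abs_eps_le (i j k : Fin 3) : |eps i j k| ≤ 1 := by
  fin_cases i <;> fin_cases j <;> fin_cases k <;> norm_num [eps]

lemma keyE (hsym : ∀ x, (Q x).IsSymm) (htr : ∀ x, (Q x).trace = 0) (x : Fin 3 → ℝ) :
    (∑ α : Fin 3, ∑ β : Fin 3, Q x α β * EQ L₄ Q β α x)
      = L₄ * (∑ α : Fin 3, ∑ β : Fin 3, ∑ l : Fin 3, ∑ k : Fin 3,
          Q x α β * (eps l β k * pd k (fun y => Q y l α) x)) := by
  have qsym : ∀ i j : Fin 3, Q x j i = Q x i j := fun i j => (hsym x).apply i j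
  have tr0 : (∑ d : Fin 3, Q x d d) = 0 := by
    have := htr x
    simpa [Matrix.trace, Matrix.diag] using this
  have split : ∀ α β : Fin 3, Q x α β * EQ L₄ Q β α x
      = L₄ / 2 * (∑ l : Fin 3, ∑ k : Fin 3,
            Q x α β * (eps l β k * pd k (fun y => Q y l α) x))
        + L₄ / 2 * (∑ l : Fin 3, ∑ k : Fin 3,
            Q x α β * (eps l α k * pd k (fun y => Q y l β) x))
        - L₄ / 3 * ((if β = α then Q x α β else 0)
            * ∑ l : Fin 3, ∑ p : Fin 3, ∑ k : Fin 3,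
                eps l p k * pd k (fun y => Q y l p) x) := by
    intro α β
    unfold EQ
    simp only [← Finset.mul_sum]
    split_ifs <;> ring
  simp only [split]
  simp only [Finset.sum_add_distrib, Finset.sum_sub_distrib, ← Finset.mul_sum]
  have P0 : (∑ α : Fin 3, ∑ β : Fin 3, ((if β = α then Q x α β else 0)
      * ∑ l : Fin 3, ∑ p : Fin 3, ∑ k : Fin 3,
          eps l p k * pd k (fun y => Q y l p) x)) = 0 := by
    have h1 : ∀ α : Fin 3, (∑ β : Fin 3, ((if β = α then Q x α β else 0)
        * ∑ l : Fin 3, ∑ p : Fin 3, ∑ k : Fin 3, eps l p k * pd k (fun y => Q y l p) x))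
        = Q x α α * ∑ l : Fin 3, ∑ p : Fin 3, ∑ k : Fin 3,
            eps l p k * pd k (fun y => Q y l p) x := by
      intro α
      rw [Finset.sum_eq_single α]
      · simp
      · intro b _ hb; simp [hb]
      · intro h; exact absurd (Finset.mem_univ α) h
    simp only [h1]
    rw [← Finset.sum_mul, tr0, zero_mul]
  have P2 : (∑ α : Fin 3, ∑ β : Fin 3, Q x α β * ∑ l : Fin 3, ∑ k : Fin 3,
        eps l α k * pd k (fun y => Q y l β) x)
      = ∑ α : Fin 3, ∑ β : Fin 3, Q x α β * ∑ l : Fin 3, ∑ k : Fin 3,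
        eps l β k * pd k (fun y => Q y l α) x := by
    rw [Finset.sum_comm]
    refine Finset.sum_congr rfl fun b _ => Finset.sum_congr rfl fun a _ => ?_
    rw [qsym a b]
  rw [P0, P2]
  ring

lemma per_term (hL₁ : 0 < L₁) (e q d : ℝ) (he : |e| ≤ 1) :
    L₄ * (q * (e * d)) ≤ L₁ / 6 * d ^ 2 + 3 * L₄ ^ 2 / (2 * L₁) * q ^ 2 := by
  obtain ⟨he1, he2⟩ := abs_le.mp he
  have key6 : 6 * L₁ * (L₄ * (q * (e * d))) ≤ L₁ ^ 2 * d ^ 2 + 9 * L₄ ^ 2 * q ^ 2 := by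
    nlinarith [sq_nonneg (L₁ * d - 3 * L₄ * (e * q)), sq_nonneg (L₄ * q),
      mul_nonneg (sq_nonneg (L₄ * q)) (by nlinarith : (0:ℝ) ≤ 1 - e ^ 2)]
  rw [← sub_nonneg]
  have expand : L₁ / 6 * d ^ 2 + 3 * L₄ ^ 2 / (2 * L₁) * q ^ 2 - L₄ * (q * (e * d))
      = (L₁ ^ 2 * d ^ 2 + 9 * L₄ ^ 2 * q ^ 2 - 6 * L₁ * (L₄ * (q * (e * d)))) / (6 * L₁) := by
    field_simp
    ring
  rw [expand]
  apply div_nonneg (by linarith) (by linarith)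

lemma boundE (hL₁ : 0 < L₁) (x : Fin 3 → ℝ) :
    L₄ * (∑ α : Fin 3, ∑ β : Fin 3, ∑ l : Fin 3, ∑ k : Fin 3,
          Q x α β * (eps l β k * pd k (fun y => Q y l α) x))
      ≤ L₁ / 2 * (∑ α : Fin 3, ∑ β : Fin 3, ∑ k : Fin 3, (pd k (fun y => Q y α β) x) ^ 2)
        + 27 * L₄ ^ 2 / (2 * L₁) * (∑ α : Fin 3, ∑ β : Fin 3, (Q x α β) ^ 2) := by
  have step1 : L₄ * (∑ α : Fin 3, ∑ β : Fin 3, ∑ l : Fin 3, ∑ k : Fin 3,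
        Q x α β * (eps l β k * pd k (fun y => Q y l α) x))
      ≤ ∑ α : Fin 3, ∑ β : Fin 3, ∑ l : Fin 3, ∑ k : Fin 3,
          (L₁ / 6 * (pd k (fun y => Q y l α) x) ^ 2
            + 3 * L₄ ^ 2 / (2 * L₁) * (Q x α β) ^ 2) := by
    rw [Finset.mul_sum]
    refine Finset.sum_le_sum fun α _ => ?_
    rw [Finset.mul_sum]
    refine Finset.sum_le_sum fun β _ => ?_
    rw [Finset.mul_sum]
    refine Finset.sum_le_sum fun l _ => ?_
    rw [Finset.mul_sum]
    refine Finset.sum_le_sum fun k _ => ?_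
    exact per_term L₁ L₄ hL₁ _ _ _ (abs_eps_le l β k)
  refine step1.trans (le_of_eq ?_)
  simp only [Finset.sum_add_distrib, Finset.sum_const, Finset.card_univ, Fintype.card_fin,
    nsmul_eq_mul, ← Finset.mul_sum]
  have swap : (∑ α : Fin 3, ∑ l : Fin 3, ∑ k : Fin 3, (pd k (fun y => Q y l α) x) ^ 2)
      = ∑ α : Fin 3, ∑ β : Fin 3, ∑ k : Fin 3, (pd k (fun y => Q y α β) x) ^ 2 :=
    Finset.sum_comm
  rw [swap]
  push_cast
  ring
end StepE

section StepE2
variable (L₁ L₄ : ℝ) (Q : (Fin 3 → ℝ) → Matrix (Fin 3) (Fin 3) ℝ)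

lemma stepE (hL₁ : 0 < L₁)
    (hs : ∀ i j : Fin 3, ContDiff ℝ (⊤ : ℕ∞) (fun y => Q y i j))
    (hc : ∀ i j : Fin 3, HasCompactSupport (fun y => Q y i j))
    (hsym : ∀ x, (Q x).IsSymm) (htr : ∀ x, (Q x).trace = 0) :
    (∫ x : Fin 3 → ℝ, ∑ α : Fin 3, ∑ β : Fin 3, Q x α β * EQ L₄ Q β α x)
      ≤ L₁ / 2 * (∫ x : Fin 3 → ℝ,
            ∑ α : Fin 3, ∑ β : Fin 3, ∑ k : Fin 3, (pd k (fun y => Q y α β) x) ^ 2)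
        + 27 * L₄ ^ 2 / (2 * L₁) * (∫ x : Fin 3 → ℝ,
            ∑ α : Fin 3, ∑ β : Fin 3, (Q x α β) ^ 2) := by
  have cQ : ∀ i j : Fin 3, Continuous (fun y => Q y i j) := fun i j => (hs i j).continuous
  have cpd1 : ∀ i j k : Fin 3, Continuous (pd k (fun y => Q y i j)) :=
    fun i j k => (pd_contDiff (hs i j) k).continuous
  have cEQ : ∀ i j : Fin 3, Continuous (fun x => EQ L₄ Q i j x) := by
    intro i j
    unfold EQ
    apply continuous_const.mul
    apply Continuous.sub
    · apply Continuous.add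
      · exact continuous_finset_sum _ fun l _ => continuous_finset_sum _ fun k _ =>
          continuous_const.mul (cpd1 l j k)
      · exact continuous_finset_sum _ fun l _ => continuous_finset_sum _ fun k _ =>
          continuous_const.mul (cpd1 l i k)
    · apply Continuous.mul continuous_const
      exact continuous_finset_sum _ fun l _ => continuous_finset_sum _ fun p _ =>
        continuous_finset_sum _ fun k _ => continuous_const.mul (cpd1 l p k)
  have intLHS : Integrable (fun x => ∑ α : Fin 3, ∑ β : Fin 3, Q x α β * EQ L₄ Q β α x) :=
    integrable_finset_sum _ fun α _ => integrable_finset_sum _ fun β _ =>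
      intg_mul (cQ α β) (hc α β) (cEQ β α)
  have intD2 : ∀ i j k : Fin 3, Integrable (fun x => (pd k (fun y => Q y i j) x) ^ 2) := by
    intro i j k
    have := intg_mul (cpd1 i j k) (pd_hcs (hc i j) k) (cpd1 i j k)
    simpa [pow_two] using this
  have intQ2 : ∀ i j : Fin 3, Integrable (fun x => (Q x i j) ^ 2) := by
    intro i j
    have := intg_mul (cQ i j) (hc i j) (cQ i j)
    simpa [pow_two] using this
  have intGrad : Integrable (fun x => ∑ α : Fin 3, ∑ β : Fin 3, ∑ k : Fin 3,
      (pd k (fun y => Q y α β) x) ^ 2) :=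
    integrable_finset_sum _ fun α _ => integrable_finset_sum _ fun β _ =>
      integrable_finset_sum _ fun k _ => intD2 α β k
  have intS : Integrable (fun x => ∑ α : Fin 3, ∑ β : Fin 3, (Q x α β) ^ 2) :=
    integrable_finset_sum _ fun α _ => integrable_finset_sum _ fun β _ => intQ2 α β
  have mono : (∫ x : Fin 3 → ℝ, ∑ α : Fin 3, ∑ β : Fin 3, Q x α β * EQ L₄ Q β α x)
      ≤ ∫ x : Fin 3 → ℝ, (L₁ / 2 * (∑ α : Fin 3, ∑ β : Fin 3, ∑ k : Fin 3,
            (pd k (fun y => Q y α β) x) ^ 2)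
          + 27 * L₄ ^ 2 / (2 * L₁) * (∑ α : Fin 3, ∑ β : Fin 3, (Q x α β) ^ 2)) := by
    refine integral_mono intLHS ((intGrad.const_mul _).add (intS.const_mul _)) fun x => ?_
    rw [keyE L₄ Q hsym htr x]
    exact boundE L₁ L₄ Q hL₁ x
  refine mono.trans (le_of_eq ?_)
  rw [integral_add (intGrad.const_mul _) (intS.const_mul _), integral_const_mul,
    integral_const_mul]
end StepE2

section StepB
variable (a b c : ℝ) (Q : (Fin 3 → ℝ) → Matrix (Fin 3) (Fin 3) ℝ)

lemma hcs_finset_sum {ι : Type*} (s : Finset ι) (f : ι → (Fin 3 → ℝ) → ℝ)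
    (h : ∀ i ∈ s, HasCompactSupport (f i)) :
    HasCompactSupport (fun x => ∑ i ∈ s, f i x) := by
  classical
  induction s using Finset.induction_on with
  | empty =>
    simp only [Finset.sum_empty]
    rw [hasCompactSupport_def]
    simp [tsupport, Function.support]
  | @insert i s his ih =>
    simp only [Finset.sum_insert his]
    exact (h i (Finset.mem_insert_self i s)).add
      (ih fun j hj => h j (Finset.mem_insert_of_mem hj))

lemma keyB (hc0 : 0 < c) (hsym : ∀ x, (Q x).IsSymm) (htr : ∀ x, (Q x).trace = 0)
    (x : Fin 3 → ℝ) :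
    (∑ α : Fin 3, ∑ β : Fin 3, Q x α β * bulkB a b c (Q x) β α)
      ≤ (|a| + 14 * |b|) * ((∑ α : Fin 3, ∑ β : Fin 3, (Q x α β) ^ 2)
          + (∑ α : Fin 3, ∑ β : Fin 3, (Q x α β) ^ 2) ^ 2) := by
  have qsym : ∀ i j : Fin 3, Q x j i = Q x i j := fun i j => (hsym x).apply i j
  have tr0 : (∑ d : Fin 3, Q x d d) = 0 := by
    have := htr x
    simpa [Matrix.trace, Matrix.diag] using this
  set s : ℝ := ∑ α : Fin 3, ∑ β : Fin 3, (Q x α β) ^ 2 with hs_def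
  have tQ2 : (Q x ^ 2).trace = s := by
    have h1 : (Q x ^ 2).trace = ∑ d : Fin 3, ∑ γ : Fin 3, Q x d γ * Q x γ d := by
      simp [pow_two, Matrix.trace, Matrix.diag, Matrix.mul_apply]
    rw [h1, hs_def]
    refine Finset.sum_congr rfl fun d _ => Finset.sum_congr rfl fun γ _ => ?_
    rw [qsym d γ, pow_two]
  have bulk_entry : ∀ i j : Fin 3, bulkB a b c (Q x) i j
      = -a * Q x i j + b * ((∑ γ : Fin 3, Q x i γ * Q x γ j)
          - s / 3 * (if i = j then 1 else 0)) - c * s * Q x i j := by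
    intro i j
    simp only [bulkB, Matrix.add_apply, Matrix.sub_apply, Matrix.smul_apply,
      Matrix.one_apply, smul_eq_mul, tQ2]
    rw [show (Q x ^ 2) i j = ∑ γ : Fin 3, Q x i γ * Q x γ j from by
      simp [pow_two, Matrix.mul_apply]]
    all_goals split_ifs <;> ring
  simp only [bulk_entry]
  have split : ∀ α β : Fin 3,
      Q x α β * (-a * Q x β α + b * ((∑ γ : Fin 3, Q x β γ * Q x γ α)
          - s / 3 * (if β = α then (1:ℝ) else 0)) - c * s * Q x β α)
      = -a * (Q x α β * Q x β α)
        + b * (∑ γ : Fin 3, Q x α β * (Q x β γ * Q x γ α))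
        - b * (s / 3) * (if β = α then Q x α β else 0)
        - c * s * (Q x α β * Q x β α) := by
    intro α β
    rw [← Finset.mul_sum]
    split_ifs <;> ring
  simp only [split]
  simp only [Finset.sum_add_distrib, Finset.sum_sub_distrib, ← Finset.mul_sum]
  have Pq : (∑ α : Fin 3, ∑ β : Fin 3, Q x α β * Q x β α) = s := by
    rw [hs_def]
    refine Finset.sum_congr rfl fun α _ => Finset.sum_congr rfl fun β _ => ?_
    rw [qsym α β, pow_two]
  have P0 : (∑ α : Fin 3, ∑ β : Fin 3, if β = α then Q x α β else 0) = 0 := by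
    have h1 : ∀ α : Fin 3, (∑ β : Fin 3, if β = α then Q x α β else 0) = Q x α α := by
      intro α
      rw [Finset.sum_eq_single α]
      · simp
      · intro b _ hb; simp [hb]
      · intro h; exact absurd (Finset.mem_univ α) h
    simp only [h1]
    exact tr0
  rw [Pq, P0]
  rw [show (∑ α : Fin 3, ∑ β : Fin 3, Q x α β * ∑ γ : Fin 3, Q x β γ * Q x γ α)
      = ∑ α : Fin 3, ∑ β : Fin 3, ∑ γ : Fin 3, Q x α β * (Q x β γ * Q x γ α) from
    Finset.sum_congr rfl fun α _ => Finset.sum_congr rfl fun β _ => Finset.mul_sum _ _ _]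
  -- now bound  -a*s + b*T3 - 0 - c*s*s
  have s0 : 0 ≤ s := Finset.sum_nonneg fun α _ => Finset.sum_nonneg fun β _ => sq_nonneg _
  have hq2 : ∀ i j : Fin 3, (Q x i j) ^ 2 ≤ s := by
    intro i j
    have h1 : (Q x i j) ^ 2 ≤ ∑ β : Fin 3, (Q x i β) ^ 2 :=
      Finset.single_le_sum (f := fun b => (Q x i b) ^ 2)
        (fun b _ => sq_nonneg _) (Finset.mem_univ j)
    have h2 : (∑ β : Fin 3, (Q x i β) ^ 2) ≤ s := by
      rw [hs_def]
      exact Finset.single_le_sum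
        (f := fun α => ∑ β : Fin 3, (Q x α β) ^ 2)
        (fun α _ => Finset.sum_nonneg fun b _ => sq_nonneg _) (Finset.mem_univ i)
    linarith
  have per : ∀ α β γ : Fin 3, |Q x α β * (Q x β γ * Q x γ α)| ≤ (s ^ 2 + s) / 2 := by
    intro α β γ
    have h1 := hq2 α β; have h2 := hq2 β γ; have h3 := hq2 γ α
    have h12 : (Q x α β * Q x β γ) ^ 2 ≤ s ^ 2 := by
      nlinarith [sq_nonneg (Q x α β), sq_nonneg (Q x β γ)]
    rw [abs_le]
    constructor
    · nlinarith [sq_nonneg (Q x α β * Q x β γ + Q x γ α)]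
    · nlinarith [sq_nonneg (Q x α β * Q x β γ - Q x γ α)]
  have hT3 : |∑ α : Fin 3, ∑ β : Fin 3, ∑ γ : Fin 3, Q x α β * (Q x β γ * Q x γ α)|
      ≤ 27 * (s ^ 2 + s) / 2 := by
    have step1 : |∑ α : Fin 3, ∑ β : Fin 3, ∑ γ : Fin 3, Q x α β * (Q x β γ * Q x γ α)|
        ≤ ∑ α : Fin 3, ∑ β : Fin 3, ∑ γ : Fin 3, |Q x α β * (Q x β γ * Q x γ α)| := by
      refine (Finset.abs_sum_le_sum_abs _ _).trans ?_
      refine Finset.sum_le_sum fun α _ => ?_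
      refine (Finset.abs_sum_le_sum_abs _ _).trans ?_
      refine Finset.sum_le_sum fun β _ => ?_
      exact Finset.abs_sum_le_sum_abs _ _
    refine step1.trans ?_
    have step2 : (∑ α : Fin 3, ∑ β : Fin 3, ∑ γ : Fin 3, |Q x α β * (Q x β γ * Q x γ α)|)
        ≤ ∑ _α : Fin 3, ∑ _β : Fin 3, ∑ _γ : Fin 3, (s ^ 2 + s) / 2 :=
      Finset.sum_le_sum fun α _ => Finset.sum_le_sum fun β _ =>
        Finset.sum_le_sum fun γ _ => per α β γ
    refine step2.trans (le_of_eq ?_)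
    simp [Finset.sum_const, Finset.card_univ]
    ring
  have hbT3 : b * (∑ α : Fin 3, ∑ β : Fin 3, ∑ γ : Fin 3, Q x α β * (Q x β γ * Q x γ α))
      ≤ |b| * (27 * (s ^ 2 + s) / 2) := by
    calc b * _ ≤ |b * (∑ α : Fin 3, ∑ β : Fin 3, ∑ γ : Fin 3,
          Q x α β * (Q x β γ * Q x γ α))| := le_abs_self _
      _ = |b| * |∑ α : Fin 3, ∑ β : Fin 3, ∑ γ : Fin 3,
          Q x α β * (Q x β γ * Q x γ α)| := abs_mul _ _
      _ ≤ |b| * (27 * (s ^ 2 + s) / 2) :=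
          mul_le_mul_of_nonneg_left hT3 (abs_nonneg b)
  have ha : -a * s ≤ |a| * s := mul_le_mul_of_nonneg_right (neg_le_abs a) s0
  have hcs : 0 ≤ c * s * s := by positivity
  nlinarith [mul_nonneg (abs_nonneg a) (sq_nonneg s), mul_nonneg (abs_nonneg b) s0,
    mul_nonneg (abs_nonneg b) (sq_nonneg s)]

lemma stepB (hc0 : 0 < c)
    (hs : ∀ i j : Fin 3, ContDiff ℝ (⊤ : ℕ∞) (fun y => Q y i j))
    (hc : ∀ i j : Fin 3, HasCompactSupport (fun y => Q y i j))
    (hsym : ∀ x, (Q x).IsSymm) (htr : ∀ x, (Q x).trace = 0) :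
    (∫ x : Fin 3 → ℝ, ∑ α : Fin 3, ∑ β : Fin 3, Q x α β * bulkB a b c (Q x) β α)
      ≤ (|a| + 14 * |b|) * (∫ x : Fin 3 → ℝ,
          (∑ α : Fin 3, ∑ β : Fin 3, (Q x α β) ^ 2)
            + (∑ α : Fin 3, ∑ β : Fin 3, (Q x α β) ^ 2) ^ 2) := by
  have cQ : ∀ i j : Fin 3, Continuous (fun y => Q y i j) := fun i j => (hs i j).continuous
  have cS : Continuous (fun x => ∑ α : Fin 3, ∑ β : Fin 3, (Q x α β) ^ 2) :=
    continuous_finset_sum _ fun α _ => continuous_finset_sum _ fun β _ => (cQ α β).pow 2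
  have hcsS : HasCompactSupport (fun x => ∑ α : Fin 3, ∑ β : Fin 3, (Q x α β) ^ 2) := by
    apply hcs_finset_sum
    intro α _
    apply hcs_finset_sum
    intro β _
    have : HasCompactSupport (fun x => Q x α β * Q x α β) := (hc α β).mul_right
    simpa [pow_two] using this
  have intS : Integrable (fun x => ∑ α : Fin 3, ∑ β : Fin 3, (Q x α β) ^ 2) :=
    cS.integrable_of_hasCompactSupport hcsS
  have intS2 : Integrable (fun x => (∑ α : Fin 3, ∑ β : Fin 3, (Q x α β) ^ 2) ^ 2) := by
    have := intg_mul cS hcsS cS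
    simpa [pow_two] using this
  have cBulk : ∀ i j : Fin 3, Continuous (fun x => bulkB a b c (Q x) i j) := by
    intro i j
    have hfun : (fun x => bulkB a b c (Q x) i j)
        = fun x => -a * Q x i j + b * ((∑ γ : Fin 3, Q x i γ * Q x γ j)
            - (∑ α : Fin 3, ∑ β : Fin 3, (Q x α β) ^ 2) / 3 * (if i = j then 1 else 0))
          - c * (∑ α : Fin 3, ∑ β : Fin 3, (Q x α β) ^ 2) * Q x i j := by
      funext x
      have h1 : (Q x ^ 2).trace = ∑ α : Fin 3, ∑ β : Fin 3, (Q x α β) ^ 2 := by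
        have h2 : (Q x ^ 2).trace = ∑ d : Fin 3, ∑ γ : Fin 3, Q x d γ * Q x γ d := by
          simp [pow_two, Matrix.trace, Matrix.diag, Matrix.mul_apply]
        rw [h2]
        refine Finset.sum_congr rfl fun d _ => Finset.sum_congr rfl fun γ _ => ?_
        rw [(hsym x).apply d γ, pow_two]
      simp only [bulkB, Matrix.add_apply, Matrix.sub_apply, Matrix.smul_apply,
        Matrix.one_apply, smul_eq_mul, h1]
      rw [show (Q x ^ 2) i j = ∑ γ : Fin 3, Q x i γ * Q x γ j from by
        simp [pow_two, Matrix.mul_apply]]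
      all_goals split_ifs <;> ring
    rw [hfun]
    apply Continuous.sub
    · apply Continuous.add
      · exact continuous_const.mul (cQ i j)
      · apply continuous_const.mul
        apply Continuous.sub
        · exact continuous_finset_sum _ fun γ _ => (cQ i γ).mul (cQ γ j)
        · exact ((cS.div_const 3).mul continuous_const)
    · exact ((continuous_const.mul cS).mul (cQ i j))
  have intLHS : Integrable (fun x => ∑ α : Fin 3, ∑ β : Fin 3,
      Q x α β * bulkB a b c (Q x) β α) :=
    integrable_finset_sum _ fun α _ => integrable_finset_sum _ fun β _ =>
      intg_mul (cQ α β) (hc α β) (cBulk β α)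
  have intSS : Integrable (fun x => (∑ α : Fin 3, ∑ β : Fin 3, (Q x α β) ^ 2)
      + (∑ α : Fin 3, ∑ β : Fin 3, (Q x α β) ^ 2) ^ 2) := intS.add intS2
  have mono := integral_mono
    (f := fun x => ∑ α : Fin 3, ∑ β : Fin 3, Q x α β * bulkB a b c (Q x) β α)
    (g := fun x => (|a| + 14 * |b|) * ((∑ α : Fin 3, ∑ β : Fin 3, (Q x α β) ^ 2)
      + (∑ α : Fin 3, ∑ β : Fin 3, (Q x α β) ^ 2) ^ 2))
    intLHS (intSS.const_mul _) (fun x => keyB a b c Q hc0 hsym htr x)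
  refine mono.trans (le_of_eq ?_)
  rw [integral_const_mul]
end StepB

theorem trace_Q_mul_HQ_upper_bound (a b : ℝ) (c : ℝ) (L₁ : ℝ) (L₄ : ℝ)
    (hc : 0 < c) (hL₁ : 0 < L₁) :
    ∃ C : ℝ, 0 ≤ C ∧
      ∀ L₂ L₃ : ℝ, 0 ≤ L₂ + L₃ →
      ∀ Q : (Fin 3 → ℝ) → Matrix (Fin 3) (Fin 3) ℝ,
        (∀ i j : Fin 3, ContDiff ℝ (⊤ : ℕ∞) (fun y => Q y i j)) →
        (∀ i j : Fin 3, HasCompactSupport (fun y => Q y i j)) →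
        (∀ x : Fin 3 → ℝ, (Q x).IsSymm) → (∀ x : Fin 3 → ℝ, (Q x).trace = 0) →
        (∫ x : Fin 3 → ℝ,
            ∑ α : Fin 3, ∑ β : Fin 3, Q x α β * HQ L₁ L₂ L₃ L₄ a b c Q β α x) ≤
          -(L₁ / 2) * (∫ x : Fin 3 → ℝ,
              ∑ α : Fin 3, ∑ β : Fin 3, ∑ k : Fin 3, (pd k (fun y => Q y α β) x) ^ 2)
            - (L₂ + L₃) * (∫ x : Fin 3 → ℝ,
                ∑ α : Fin 3, (∑ β : Fin 3, pd β (fun y => Q y α β) x) ^ 2)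
            + C * (∫ x : Fin 3 → ℝ,
                (∑ α : Fin 3, ∑ β : Fin 3, (Q x α β) ^ 2)
                  + (∑ α : Fin 3, ∑ β : Fin 3, (Q x α β) ^ 2) ^ 2) := by
  have hcE : (0:ℝ) ≤ 27 * L₄ ^ 2 / (2 * L₁) := div_nonneg (by positivity) (by linarith)
  refine ⟨27 * L₄ ^ 2 / (2 * L₁) + (|a| + 14 * |b|), by positivity, ?_⟩
  intro L₂ L₃ hL23 Q hs hcQ hsym htr
  -- regularity facts
  have cQ : ∀ i j : Fin 3, Continuous (fun y => Q y i j) := fun i j => (hs i j).continuous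
  have cpd1 : ∀ i j k : Fin 3, Continuous (pd k (fun y => Q y i j)) :=
    fun i j k => (pd_contDiff (hs i j) k).continuous
  have cpd2 : ∀ i j k p : Fin 3, Continuous (pd k (pd p (fun y => Q y i j))) :=
    fun i j k p => (pd_contDiff (pd_contDiff (hs i j) p) k).continuous
  have cMQ : ∀ i j : Fin 3, Continuous (fun x => MQ L₁ L₂ L₃ Q i j x) := by
    intro i j
    unfold MQ
    apply Continuous.add
    · exact continuous_const.mul (continuous_finset_sum _ fun k _ => cpd2 i j k k)
    · apply continuous_const.mul
      apply Continuous.sub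
      · exact (continuous_finset_sum _ fun k _ => cpd2 i k k j).add
          (continuous_finset_sum _ fun k _ => cpd2 j k k i)
      · exact continuous_const.mul (continuous_finset_sum _ fun k _ =>
          continuous_finset_sum _ fun p _ => cpd2 k p k p)
  have cEQ : ∀ i j : Fin 3, Continuous (fun x => EQ L₄ Q i j x) := by
    intro i j
    unfold EQ
    apply continuous_const.mul
    apply Continuous.sub
    · exact ((continuous_finset_sum _ fun l _ => continuous_finset_sum _ fun k _ =>
        continuous_const.mul (cpd1 l j k))).add
        (continuous_finset_sum _ fun l _ => continuous_finset_sum _ fun k _ =>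
          continuous_const.mul (cpd1 l i k))
    · exact continuous_const.mul (continuous_finset_sum _ fun l _ =>
        continuous_finset_sum _ fun p _ => continuous_finset_sum _ fun k _ =>
          continuous_const.mul (cpd1 l p k))
  have cBulk : ∀ i j : Fin 3, Continuous (fun x => bulkB a b c (Q x) i j) := by
    intro i j
    have cS : Continuous (fun x => ∑ α : Fin 3, ∑ β : Fin 3, (Q x α β) ^ 2) :=
      continuous_finset_sum _ fun α _ => continuous_finset_sum _ fun β _ => (cQ α β).pow 2
    have hfun : (fun x => bulkB a b c (Q x) i j)
        = fun x => -a * Q x i j + b * ((∑ γ : Fin 3, Q x i γ * Q x γ j)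
            - (∑ α : Fin 3, ∑ β : Fin 3, (Q x α β) ^ 2) / 3 * (if i = j then 1 else 0))
          - c * (∑ α : Fin 3, ∑ β : Fin 3, (Q x α β) ^ 2) * Q x i j := by
      funext x
      have h1 : (Q x ^ 2).trace = ∑ α : Fin 3, ∑ β : Fin 3, (Q x α β) ^ 2 := by
        have h2 : (Q x ^ 2).trace = ∑ d : Fin 3, ∑ γ : Fin 3, Q x d γ * Q x γ d := by
          simp [pow_two, Matrix.trace, Matrix.diag, Matrix.mul_apply]
        rw [h2]
        refine Finset.sum_congr rfl fun d _ => Finset.sum_congr rfl fun γ _ => ?_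
        rw [(hsym x).apply d γ, pow_two]
      simp only [bulkB, Matrix.add_apply, Matrix.sub_apply, Matrix.smul_apply,
        Matrix.one_apply, smul_eq_mul, h1]
      rw [show (Q x ^ 2) i j = ∑ γ : Fin 3, Q x i γ * Q x γ j from by
        simp [pow_two, Matrix.mul_apply]]
      all_goals split_ifs <;> ring
    rw [hfun]
    apply Continuous.sub
    · apply Continuous.add
      · exact continuous_const.mul (cQ i j)
      · apply continuous_const.mul
        apply Continuous.sub
        · exact continuous_finset_sum _ fun γ _ => (cQ i γ).mul (cQ γ j)
        · exact ((cS.div_const 3).mul continuous_const)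
    · exact ((continuous_const.mul cS).mul (cQ i j))
  -- integrability of the three integrands
  have intM : Integrable (fun x => ∑ α : Fin 3, ∑ β : Fin 3,
      Q x α β * MQ L₁ L₂ L₃ Q β α x) :=
    integrable_finset_sum _ fun α _ => integrable_finset_sum _ fun β _ =>
      intg_mul (cQ α β) (hcQ α β) (cMQ β α)
  have intE : Integrable (fun x => ∑ α : Fin 3, ∑ β : Fin 3,
      Q x α β * EQ L₄ Q β α x) :=
    integrable_finset_sum _ fun α _ => integrable_finset_sum _ fun β _ =>
      intg_mul (cQ α β) (hcQ α β) (cEQ β α)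
  have intB : Integrable (fun x => ∑ α : Fin 3, ∑ β : Fin 3,
      Q x α β * bulkB a b c (Q x) β α) :=
    integrable_finset_sum _ fun α _ => integrable_finset_sum _ fun β _ =>
      intg_mul (cQ α β) (hcQ α β) (cBulk β α)
  -- split the integral
  have hsplit : (fun x => ∑ α : Fin 3, ∑ β : Fin 3, Q x α β * HQ L₁ L₂ L₃ L₄ a b c Q β α x)
      = fun x => (∑ α : Fin 3, ∑ β : Fin 3, Q x α β * MQ L₁ L₂ L₃ Q β α x)
        + ((∑ α : Fin 3, ∑ β : Fin 3, Q x α β * EQ L₄ Q β α x)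
          + (∑ α : Fin 3, ∑ β : Fin 3, Q x α β * bulkB a b c (Q x) β α)) := by
    funext x
    unfold HQ
    simp only [mul_add, Finset.sum_add_distrib]
    ring
  have intEB : Integrable (fun x => (∑ α : Fin 3, ∑ β : Fin 3, Q x α β * EQ L₄ Q β α x)
      + (∑ α : Fin 3, ∑ β : Fin 3, Q x α β * bulkB a b c (Q x) β α)) := intE.add intB
  rw [hsplit, integral_add intM intEB, integral_add intE intB]
  -- the three estimates
  have hM := stepM L₁ L₂ L₃ Q hs hcQ hsym htr
  have hE := stepE L₁ L₄ Q hL₁ hs hcQ hsym htr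
  have hB := stepB a b c Q hc hs hcQ hsym htr
  -- integral bookkeeping for the |Q|² terms
  have intS : Integrable (fun x => ∑ α : Fin 3, ∑ β : Fin 3, (Q x α β) ^ 2) := by
    refine integrable_finset_sum _ fun α _ => integrable_finset_sum _ fun β _ => ?_
    have := intg_mul (cQ α β) (hcQ α β) (cQ α β)
    simpa [pow_two] using this
  have intS2 : Integrable (fun x => (∑ α : Fin 3, ∑ β : Fin 3, (Q x α β) ^ 2) ^ 2) := by
    have cS : Continuous (fun x => ∑ α : Fin 3, ∑ β : Fin 3, (Q x α β) ^ 2) :=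
      continuous_finset_sum _ fun α _ => continuous_finset_sum _ fun β _ => (cQ α β).pow 2
    have hcsS : HasCompactSupport (fun x => ∑ α : Fin 3, ∑ β : Fin 3, (Q x α β) ^ 2) := by
      apply hcs_finset_sum
      intro α _
      apply hcs_finset_sum
      intro β _
      have : HasCompactSupport (fun x => Q x α β * Q x α β) := (hcQ α β).mul_right
      simpa [pow_two] using this
    have := intg_mul cS hcsS cS
    simpa [pow_two] using this
  have hIsplit : (∫ x : Fin 3 → ℝ, ((∑ α : Fin 3, ∑ β : Fin 3, (Q x α β) ^ 2)
        + (∑ α : Fin 3, ∑ β : Fin 3, (Q x α β) ^ 2) ^ 2))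
      = (∫ x : Fin 3 → ℝ, ∑ α : Fin 3, ∑ β : Fin 3, (Q x α β) ^ 2)
        + ∫ x : Fin 3 → ℝ, (∑ α : Fin 3, ∑ β : Fin 3, (Q x α β) ^ 2) ^ 2 :=
    integral_add intS intS2
  have hIs2 : 0 ≤ ∫ x : Fin 3 → ℝ, (∑ α : Fin 3, ∑ β : Fin 3, (Q x α β) ^ 2) ^ 2 :=
    integral_nonneg fun x => sq_nonneg _
  have hprod : 0 ≤ 27 * L₄ ^ 2 / (2 * L₁)
      * ∫ x : Fin 3 → ℝ, (∑ α : Fin 3, ∑ β : Fin 3, (Q x α β) ^ 2) ^ 2 :=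
    mul_nonneg hcE hIs2
  have hprod2 : 0 ≤ (|a| + 14 * |b|)
      * ∫ x : Fin 3 → ℝ, (∑ α : Fin 3, ∑ β : Fin 3, (Q x α β) ^ 2) ^ 2 :=
    mul_nonneg (by positivity) hIs2
  have hEQ2 : 27 * L₄ ^ 2 / (2 * L₁) * (∫ x : Fin 3 → ℝ,
        ((∑ α : Fin 3, ∑ β : Fin 3, (Q x α β) ^ 2)
          + (∑ α : Fin 3, ∑ β : Fin 3, (Q x α β) ^ 2) ^ 2))
      = 27 * L₄ ^ 2 / (2 * L₁) * (∫ x : Fin 3 → ℝ, ∑ α : Fin 3, ∑ β : Fin 3, (Q x α β) ^ 2)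
        + 27 * L₄ ^ 2 / (2 * L₁)
          * ∫ x : Fin 3 → ℝ, (∑ α : Fin 3, ∑ β : Fin 3, (Q x α β) ^ 2) ^ 2 := by
    rw [hIsplit]; ring
  linarith [hM, hE, hB, hEQ2, hprod]
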